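/- For every finite simple graph G with at least one vertex, z'(G) = z(G); that is, the largest k for which G has a Grundy coloring using k colors containing a b-vertex u such that for every color j ≠ c(u) with 1 ≤ j ≤ k, u is adjacent to a b-vertex of color j, equals the largest k for which G has a Grundy coloring using k colors containing such a b-vertex whose own color is k. -/

import Mathlib

variable {V : Type*} {W : Type*}

/-- A proper coloring of `G` using colors `{1, …, k}`: colors lie in `{1,…,k}`,
adjacent vertices get different colors, and every color in `{1,…,k}` is used. -/
def IsProperKColoring (G : SimpleGraph V) (k : ℕ) (c : V → ℕ) : Prop :=
  (∀ v, c v ∈ Set.Icc 1 k) ∧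
  (∀ u v, G.Adj u v → c u ≠ c v) ∧
  (∀ j ∈ Set.Icc 1 k, ∃ v, c v = j)

/-- `u` is a b-vertex: every color `j ∈ {1,…,k}` with `j ≠ c u` appears on a neighbor of `u`. -/
def IsBVertex (G : SimpleGraph V) (k : ℕ) (c : V → ℕ) (u : V) : Prop :=
  ∀ j ∈ Set.Icc 1 k, j ≠ c u → ∃ w, G.Adj u w ∧ c w = j

/-- `u` is a nice vertex: it is a b-vertex and for every color `j ≠ c u` in `{1,…,k}`
it has a b-vertex neighbor of color `j`. -/
def IsNiceVertex (G : SimpleGraph V) (k : ℕ) (c : V → ℕ) (u : V) : Prop :=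
  IsBVertex G k c u ∧
  ∀ j ∈ Set.Icc 1 k, j ≠ c u → ∃ w, G.Adj u w ∧ c w = j ∧ IsBVertex G k c w

/-- A Grundy coloring using `k` colors: proper, and every vertex of color `j` has a
neighbor of each smaller color `i ≥ 1`. -/
def IsGrundyColoring (G : SimpleGraph V) (k : ℕ) (c : V → ℕ) : Prop :=
  IsProperKColoring G k c ∧
  ∀ i j : ℕ, 1 ≤ i → i < j → j ≤ k → ∀ v, c v = j → ∃ w, G.Adj v w ∧ c w = i

/-- A z-coloring: a Grundy coloring with a nice vertex of (top) color `k`. -/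
def IsZColoring (G : SimpleGraph V) (k : ℕ) (c : V → ℕ) : Prop :=
  IsGrundyColoring G k c ∧ ∃ u, c u = k ∧ IsNiceVertex G k c u

/-- A b*-coloring: a proper coloring with a nice vertex of (top) color `k`. -/
def IsBStarColoring (G : SimpleGraph V) (k : ℕ) (c : V → ℕ) : Prop :=
  IsProperKColoring G k c ∧ ∃ u, c u = k ∧ IsNiceVertex G k c u

/-- The z-chromatic number: largest `k` admitting a z-coloring with `k` colors. -/
noncomputable def zNum (G : SimpleGraph V) : ℕ :=
  sSup {k | ∃ c : V → ℕ, IsZColoring G k c}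

/-- The b*-chromatic number: largest `k` admitting a b*-coloring with `k` colors. -/
noncomputable def bStar (G : SimpleGraph V) : ℕ :=
  sSup {k | ∃ c : V → ℕ, IsBStarColoring G k c}

/-- `m*(G)`: the largest `k` such that some vertex `u` has `k` distinct neighbors,
each of degree at least `k`. -/
noncomputable def mStar (G : SimpleGraph V) : ℕ :=
  sSup {k | ∃ (u : V) (s : Finset V), (↑s : Set V) ⊆ G.neighborSet u ∧ s.card = k ∧
    ∀ v ∈ s, k ≤ (G.neighborSet v).ncard}

/-- The clique number `ω(G)`. -/
noncomputable def omegaNum (G : SimpleGraph V) : ℕ :=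
  sSup {n | ∃ s : Finset V, G.IsNClique n s}
/-- `z'(G)`: the largest `k` admitting a Grundy coloring with `k` colors containing a
b-vertex `u` such that for every `j ∈ {1,…,k}` with `j ≠ c u`, `u` has a b-vertex
neighbor of color `j` (the nice vertex need not have the top color). -/
noncomputable def zPrime (G : SimpleGraph V) : ℕ :=
  sSup {k | ∃ c : V → ℕ, IsGrundyColoring G k c ∧ ∃ u, IsNiceVertex G k c u}

/-! If the nice vertex `u` has color `t < k`, renumber the colors: classes below `t` keep
their color, classes above `t` move down by one, and every vertex of color `t` takes the least
color `≥ t` missing from its renumbered neighbourhood. That vertex then still sees every smaller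
color, so the coloring stays Grundy; `u`, being a b-vertex, moves to the top color `k`, and its
former b-vertex neighbours remain b-vertices because they now see `u` in color `k`. -/

lemma isGrundyColoring_of_exists_eq_top {G : SimpleGraph V} {k : ℕ} {c : V → ℕ}
    (hrange : ∀ v, c v ∈ Set.Icc 1 k) (hadj : ∀ u v, G.Adj u v → c u ≠ c v)
    (hgrundy : ∀ i j : ℕ, 1 ≤ i → i < j → j ≤ k → ∀ v, c v = j → ∃ w, G.Adj v w ∧ c w = i)
    (htop : ∃ v, c v = k) : IsGrundyColoring G k c := by
  refine ⟨⟨hrange, hadj, fun j hj => ?_⟩, hgrundy⟩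
  obtain ⟨v, hv⟩ := htop
  rcases hj.2.lt_or_eq with hjk | rfl
  · obtain ⟨w, -, hw⟩ := hgrundy j k hj.1 hjk le_rfl v hv
    exact ⟨w, hw⟩
  · exact ⟨v, hv⟩

/-- The order-preserving bijection from `ℕ \ {t}` onto `ℕ` (its value at `t` is irrelevant). -/
def shiftDown (t j : ℕ) : ℕ := if j < t then j else j - 1

def shiftUp (t i : ℕ) : ℕ := if i < t then i else i + 1

lemma shiftDown_shiftUp (t i : ℕ) : shiftDown t (shiftUp t i) = i := by
  unfold shiftDown shiftUp; split_ifs <;> omega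

lemma shiftUp_ne (t i : ℕ) : shiftUp t i ≠ t := by
  unfold shiftUp; split_ifs <;> omega

lemma shiftUp_injective (t : ℕ) : Function.Injective (shiftUp t) := by
  intro i i' h; unfold shiftUp at h; split_ifs at h <;> omega

lemma shiftDown_injOn {t j j' : ℕ} (hj : j ≠ t) (hj' : j' ≠ t)
    (h : shiftDown t j = shiftDown t j') : j = j' := by
  unfold shiftDown at h; split_ifs at h <;> omega

lemma shiftUp_lt_of_lt_shiftDown {t i j : ℕ} (h : i < shiftDown t j) :
    shiftUp t i < j := by
  unfold shiftDown at h; unfold shiftUp; split_ifs at h ⊢ <;> omega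

lemma shiftDown_mem_Icc {k t j : ℕ} (ht : 1 ≤ t) (hj : j ∈ Set.Icc 1 k) (hjt : j ≠ t) :
    shiftDown t j ∈ Set.Icc 1 k := by
  simp only [Set.mem_Icc] at hj ⊢; unfold shiftDown; split_ifs <;> omega

lemma shiftUp_mem_Icc {k t i : ℕ} (ht : t < k) (hi : i ∈ Set.Icc 1 (k - 1)) :
    shiftUp t i ∈ Set.Icc 1 k := by
  simp only [Set.mem_Icc] at hi ⊢; unfold shiftUp; split_ifs <;> omega

section Promote

variable {G : SimpleGraph V} {c : V → ℕ} {k t : ℕ}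

def gapAbove (G : SimpleGraph V) (c : V → ℕ) (t : ℕ) (v : V) : Set ℕ :=
  {s | t ≤ s ∧ ∀ w, G.Adj v w → shiftDown t (c w) ≠ s}

noncomputable def promote (G : SimpleGraph V) (c : V → ℕ) (t : ℕ) (v : V) : ℕ :=
  if c v = t then sInf (gapAbove G c t v) else shiftDown t (c v)

lemma promote_of_ne {v : V} (h : c v ≠ t) : promote G c t v = shiftDown t (c v) :=
  if_neg h

lemma promote_of_eq {v : V} (h : c v = t) : promote G c t v = sInf (gapAbove G c t v) :=
  if_pos h

lemma promote_of_eq_shiftUp {i : ℕ} {v : V} (h : c v = shiftUp t i) : promote G c t v = i := by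
  rw [promote_of_ne (h ▸ shiftUp_ne t i), h, shiftDown_shiftUp]

lemma top_mem_gapAbove (hc : ∀ v, c v ∈ Set.Icc 1 k) (htk : t ≤ k) (v : V) :
    k ∈ gapAbove G c t v := by
  refine ⟨htk, fun w _ => ?_⟩
  have := hc w
  simp only [Set.mem_Icc] at this; unfold shiftDown; split_ifs <;> omega

lemma promote_mem_gapAbove (hc : ∀ v, c v ∈ Set.Icc 1 k) (htk : t ≤ k) {v : V} (h : c v = t) :
    promote G c t v ∈ gapAbove G c t v :=
  promote_of_eq h ▸ Nat.sInf_mem ⟨k, top_mem_gapAbove hc htk v⟩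

lemma promote_mem_Icc (hc : ∀ v, c v ∈ Set.Icc 1 k) (ht : t ∈ Set.Icc 1 k) (v : V) :
    promote G c t v ∈ Set.Icc 1 k := by
  by_cases h : c v = t
  · have hle : promote G c t v ≤ k :=
      promote_of_eq h ▸ Nat.sInf_le (top_mem_gapAbove hc ht.2 v)
    exact ⟨ht.1.trans (promote_mem_gapAbove hc ht.2 h).1, hle⟩
  · exact promote_of_ne h ▸ shiftDown_mem_Icc ht.1 (hc v) h

lemma promote_adj_ne (hc : ∀ v, c v ∈ Set.Icc 1 k) (htk : t ≤ k)
    (hadj : ∀ u v, G.Adj u v → c u ≠ c v) {x y : V} (hxy : G.Adj x y) :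
    promote G c t x ≠ promote G c t y := by
  have key : ∀ {x y}, G.Adj x y → c x = t → promote G c t x ≠ promote G c t y := by
    intro x y hxy hx
    have hy : c y ≠ t := hx ▸ (hadj x y hxy).symm
    rw [promote_of_ne hy]
    exact ((promote_mem_gapAbove hc htk hx).2 y hxy).symm
  by_cases hx : c x = t
  · exact key hxy hx
  by_cases hy : c y = t
  · exact (key hxy.symm hy).symm
  rw [promote_of_ne hx, promote_of_ne hy]
  exact fun h => hadj x y hxy (shiftDown_injOn hx hy h)

lemma exists_adj_promote_eq_of_mem_Ico (hadj : ∀ u v, G.Adj u v → c u ≠ c v) {v : V}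
    (hv : c v = t) {i : ℕ} (hi : i ∈ Set.Ico t (promote G c t v)) :
    ∃ w, G.Adj v w ∧ promote G c t w = i := by
  rw [promote_of_eq hv] at hi
  have hgap := Nat.notMem_of_lt_sInf hi.2
  simp only [gapAbove, Set.mem_ofPred_eq, not_and, not_forall, not_not] at hgap
  obtain ⟨w, hvw, hw⟩ := hgap hi.1
  exact ⟨w, hvw, promote_of_ne (hv ▸ (hadj v w hvw).symm) ▸ hw⟩

lemma exists_adj_promote_eq_of_lt (hc : IsGrundyColoring G k c) (ht : t ∈ Set.Icc 1 k) :
    ∀ i j : ℕ, 1 ≤ i → i < j → j ≤ k → ∀ v, promote G c t v = j →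
      ∃ w, G.Adj v w ∧ promote G c t w = i := by
  obtain ⟨⟨hrange, hadj, -⟩, hgrundy⟩ := hc
  rintro i _ hi hij - v rfl
  by_cases hv : c v = t
  · by_cases hit : i < t
    · obtain ⟨w, hvw, hw⟩ := hgrundy i t hi hit ht.2 v hv
      exact ⟨w, hvw, promote_of_eq_shiftUp (hw.trans (if_pos hit).symm)⟩
    · exact exists_adj_promote_eq_of_mem_Ico hadj hv ⟨not_lt.1 hit, hij⟩
  · rw [promote_of_ne hv] at hij
    obtain ⟨w, hvw, hw⟩ := hgrundy (shiftUp t i) (c v) (by unfold shiftUp; split_ifs <;> omega)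
      (shiftUp_lt_of_lt_shiftDown hij) (hrange v).2 v rfl
    exact ⟨w, hvw, promote_of_eq_shiftUp hw⟩

lemma IsBVertex.exists_adj_promote_eq (ht : t < k) {x : V} (hx : IsBVertex G k c x) {r : ℕ}
    (hr : r ∈ Set.Icc 1 (k - 1)) (hrx : shiftUp t r ≠ c x) :
    ∃ w, G.Adj x w ∧ promote G c t w = r := by
  obtain ⟨w, hxw, hw⟩ := hx _ (shiftUp_mem_Icc ht hr) hrx
  exact ⟨w, hxw, promote_of_eq_shiftUp hw⟩

lemma promote_eq_top (hc : ∀ v, c v ∈ Set.Icc 1 k) (ht : t < k) {u : V} (hut : c u = t)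
    (hu : IsBVertex G k c u) : promote G c t u = k := by
  have hmem := promote_mem_gapAbove (G := G) hc ht.le hut
  refine le_antisymm (promote_of_eq hut ▸ Nat.sInf_le (top_mem_gapAbove hc ht.le u)) ?_
  by_contra! hlt
  have ht1 : 1 ≤ t := hut ▸ (hc u).1
  obtain ⟨w, huw, hw⟩ := hu _ (shiftUp_mem_Icc ht ⟨ht1.trans hmem.1, by omega⟩)
    (hut ▸ shiftUp_ne t (promote G c t u))
  exact hmem.2 w huw (hw ▸ shiftDown_shiftUp t _)

lemma isNiceVertex_promote (hc : ∀ v, c v ∈ Set.Icc 1 k) (ht : t < k) {u : V} (hut : c u = t)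
    (hu : IsNiceVertex G k c u) : IsNiceVertex G k (promote G c t) u := by
  have htop := promote_eq_top hc ht hut hu.1
  refine ⟨fun r hr hrk => hu.1.exists_adj_promote_eq ht ⟨hr.1, by have := hr.2; omega⟩
    (hut ▸ shiftUp_ne t r), fun j hj hjk => ?_⟩
  obtain ⟨w, huw, hw, hwb⟩ :=
    hu.2 (shiftUp t j) (shiftUp_mem_Icc ht ⟨hj.1, by have := hj.2; omega⟩) (hut ▸ shiftUp_ne t j)
  have hwj := promote_of_eq_shiftUp (G := G) hw
  refine ⟨w, huw, hwj, fun r hr hrj => ?_⟩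
  rcases hr.2.lt_or_eq with hrk | rfl
  · exact hwb.exists_adj_promote_eq ht ⟨hr.1, by omega⟩
      (hw ▸ (shiftUp_injective t).ne (hwj ▸ hrj))
  · exact ⟨u, huw.symm, htop⟩

lemma isZColoring_promote {u : V}
    (hc : IsGrundyColoring G k c) (hu : IsNiceVertex G k c u) (hk : c u < k) :
    IsZColoring G k (promote G c (c u)) := by
  have ⟨⟨hrange, hadj, _⟩, _⟩ := hc
  have hup := promote_eq_top hrange hk rfl hu.1
  refine ⟨isGrundyColoring_of_exists_eq_top (promote_mem_Icc hrange (hrange u))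
    (fun _ _ => promote_adj_ne hrange hk.le hadj) (exists_adj_promote_eq_of_lt hc (hrange u))
    ⟨u, hup⟩, u, hup, isNiceVertex_promote hrange hk rfl hu⟩

lemma exists_isZColoring_of_isNiceVertex {u : V}
    (hc : IsGrundyColoring G k c) (hu : IsNiceVertex G k c u) : ∃ c', IsZColoring G k c' := by
  rcases (hc.1.1 u).2.lt_or_eq with hk | hk
  · exact ⟨_, isZColoring_promote hc hu hk⟩
  · exact ⟨c, hc, u, hk, hu⟩

end Promote

theorem zPrime_eq_zNum (G : SimpleGraph V) :
    zPrime G = zNum G := by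
  unfold zPrime zNum
  congr 1
  ext k
  constructor
  · rintro ⟨c, hc, u, hu⟩
    exact exists_isZColoring_of_isNiceVertex hc hu
  · rintro ⟨c, hc, u, -, hu⟩
    exact ⟨c, hc, u, hu⟩
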